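/- arXiv:1702.01203 — 2 statements merged into one kernel-verified Lean document; each statement's English description precedes it below -/
import Mathlib

section
/- Let (μ_n) be a proper super-convolutive sequence, g_n(t) = (1/n) log ∑_j μ_n(j)e^{jt}, and Λ = lim g_n. Then for every x ∈ (0,1), the convex conjugates satisfy lim_{n→∞} g_n*(x) = Λ*(x), where f*(x) = sup_t (xt − f(t)). -/
open Filter Set
open scoped Topology

/-!
Superconvolutivity gives `μ_n(0) ≥ μ_1(0)^n` and `μ_n(n) ≥ μ_1(1)^n`, hence the bounds
`g_n(t) ≥ log μ_1(0)` and `g_n(t) ≥ t + log μ_1(1)`, uniform in `n`. For `x ∈ (0,1)` they force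
`x t - g_n(t) ≤ -γ = x·0 - Λ(0)` outside a fixed compact interval `K`, so every supremum may be
taken over `K`. Since the exponents of `g_n` lie in `[0, n]`, each `g_n` is `1`-Lipschitz; this
makes `Λ` finite and, by Ascoli, the pointwise convergence `g_n → Λ` uniform on `K`.
-/

theorem EquicontinuousOn.tendstoUniformlyOn_of_tendsto {ι X α : Type*} [TopologicalSpace X]
    [UniformSpace α] {F : ι → X → α} {f : X → α} {K : Set X} {p : Filter ι}
    (hK : IsCompact K) (hF : EquicontinuousOn F K) (h : ∀ x ∈ K, Tendsto (F · x) p (𝓝 (f x))) :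
    TendstoUniformlyOn F f p K := by
  have := (EquicontinuousOn.tendsto_uniformOnFun_iff_pi' (𝔖 := {K}) (by simpa) (by simpa) p f).2
    (tendsto_pi_nhds.2 fun x => by simpa using h x (by simpa using x.2))
  exact UniformOnFun.tendsto_iff_tendstoUniformlyOn.1 this K rfl

theorem EReal.exists_tendsto_coe_of_isBounded {ι : Type*} {p : Filter ι} [p.NeBot] {u : ι → ℝ}
    {a : EReal} {lo hi : ℝ} (h : Tendsto (fun n => (u n : EReal)) p (𝓝 a))
    (hlo : ∀ᶠ n in p, lo ≤ u n) (hhi : ∀ᶠ n in p, u n ≤ hi) :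
    ∃ l : ℝ, a = l ∧ Tendsto u p (𝓝 l) := by
  have hne_top : a ≠ ⊤ :=
    ((le_of_tendsto h (hhi.mono fun n hn => EReal.coe_le_coe hn)).trans_lt
      (EReal.coe_lt_top hi)).ne
  have hne_bot : a ≠ ⊥ :=
    ((EReal.bot_lt_coe lo).trans_le
      (ge_of_tendsto h (hlo.mono fun n hn => EReal.coe_le_coe hn))).ne'
  refine ⟨a.toReal, (EReal.coe_toReal hne_top hne_bot).symm, ?_⟩
  rwa [← EReal.tendsto_coe, EReal.coe_toReal hne_top hne_bot]

theorem EReal.coe_ciSup {ι : Sort*} [Nonempty ι] {f : ι → ℝ} (hf : BddAbove (range f)) :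
    ((⨆ i, f i : ℝ) : EReal) = ⨆ i, (f i : EReal) :=
  Monotone.map_ciSup_of_continuousAt continuous_coe_real_ereal.continuousAt
    EReal.coe_strictMono.monotone hf

theorem TendstoUniformlyOn.sub_left {ι α β : Type*} [SeminormedAddCommGroup β] {F : ι → α → β}
    {f : α → β} {p : Filter ι} {K : Set α} (h : TendstoUniformlyOn F f p K) (c : α → β) :
    TendstoUniformlyOn (fun n t => c t - F n t) (fun t => c t - f t) p K := by
  refine Metric.tendstoUniformlyOn_iff.2 fun ε hε => ?_
  filter_upwards [Metric.tendstoUniformlyOn_iff.1 h ε hε] with n hn t ht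
  rw [dist_sub_left]
  exact hn t ht

theorem tendsto_ciSup_of_tendstoUniformlyOn {ι α : Type*} [Nonempty α] {p : Filter ι}
    {F : ι → α → ℝ} {f : α → ℝ} {K : Set α} (hf : BddAbove (range f)) (hpt : ∀ t, Tendsto (F · t) p (𝓝 (f t)))
    (hunif : TendstoUniformlyOn F f p K)
    (htail : ∀ᶠ n in p, ∀ t ∉ K, F n t ≤ ⨆ t, f t) :
    Tendsto (fun n => ⨆ t, F n t) p (𝓝 (⨆ t, f t)) := by
  have hupper : ∀ ε > 0, ∀ᶠ n in p, ∀ t, F n t ≤ (⨆ t, f t) + ε := by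
    intro ε hε
    filter_upwards [htail, Metric.tendstoUniformlyOn_iff.1 hunif ε hε] with n htail_n hunif_n t
    by_cases ht : t ∈ K
    · have hclose := hunif_n t ht
      rw [Real.dist_eq, abs_lt] at hclose
      linarith [le_ciSup hf t]
    · linarith [htail_n t ht]
  rw [tendsto_order]
  refine ⟨fun a ha => ?_, fun b hb => ?_⟩
  · obtain ⟨t, ht⟩ := exists_lt_of_lt_ciSup ha
    filter_upwards [(hpt t).eventually_const_lt ht, hupper 1 one_pos] with n hn hbdd
    exact hn.trans_le (le_ciSup ⟨_, forall_mem_range.2 hbdd⟩ t)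
  · filter_upwards [hupper ((b - ⨆ t, f t) / 2) (by linarith)] with n hn
    exact (ciSup_le hn).trans_lt (by linarith)

section LogSumExp

variable {w : ℕ → ℝ} {N : ℕ}

theorem mul_exp_le_sum_mul_exp (hw : ∀ j, 0 ≤ w j) {j : ℕ} (hj : j ≤ N) (t : ℝ) :
    w j * Real.exp (j * t) ≤ ∑ k ∈ Finset.range (N + 1), w k * Real.exp (k * t) :=
  Finset.single_le_sum (f := fun k => w k * Real.exp (k * t))
    (fun k _ => mul_nonneg (hw k) (Real.exp_pos _).le) (Finset.mem_range.2 (by omega))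

theorem log_add_le_log_sum_mul_exp (hw : ∀ j, 0 ≤ w j) {j : ℕ} (hj : j ≤ N) (hwj : 0 < w j)
    (t : ℝ) :
    Real.log (w j) + j * t ≤ Real.log (∑ k ∈ Finset.range (N + 1), w k * Real.exp (k * t)) := by
  rw [← Real.log_exp (j * t), ← Real.log_mul hwj.ne' (Real.exp_pos _).ne']
  exact Real.log_le_log (by positivity) (mul_exp_le_sum_mul_exp hw hj t)

theorem log_sum_mul_exp_le_add_mul_dist (hw : ∀ j, 0 ≤ w j) (hw0 : 0 < w 0) (s t : ℝ) :
    Real.log (∑ k ∈ Finset.range (N + 1), w k * Real.exp (k * t)) ≤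
      Real.log (∑ k ∈ Finset.range (N + 1), w k * Real.exp (k * s)) + N * dist t s := by
  have hpos : ∀ u : ℝ, 0 < ∑ k ∈ Finset.range (N + 1), w k * Real.exp (k * u) := fun u =>
    (mul_pos hw0 (Real.exp_pos _)).trans_le (mul_exp_le_sum_mul_exp hw (Nat.zero_le N) u)
  have hsum : ∑ k ∈ Finset.range (N + 1), w k * Real.exp (k * t) ≤
      Real.exp (N * dist t s) * ∑ k ∈ Finset.range (N + 1), w k * Real.exp (k * s) := by
    rw [Finset.mul_sum]
    refine Finset.sum_le_sum fun k hk => ?_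
    have hkN : (k : ℝ) ≤ N := by exact_mod_cast Finset.mem_range_succ_iff.1 hk
    have hexp : k * t ≤ N * dist t s + k * s := by
      rw [Real.dist_eq]
      nlinarith [le_abs_self (t - s), abs_nonneg (t - s), (Nat.cast_nonneg k : (0 : ℝ) ≤ k)]
    calc w k * Real.exp (k * t) ≤ w k * Real.exp (N * dist t s + k * s) :=
          mul_le_mul_of_nonneg_left (Real.exp_le_exp.2 hexp) (hw k)
      _ = Real.exp (N * dist t s) * (w k * Real.exp (k * s)) := by rw [Real.exp_add]; ring
  calc _ ≤ Real.log (Real.exp (N * dist t s) *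
          ∑ k ∈ Finset.range (N + 1), w k * Real.exp (k * s)) := Real.log_le_log (hpos t) hsum
    _ = _ := by rw [Real.log_mul (Real.exp_pos _).ne' (hpos s).ne', Real.log_exp, add_comm]

end LogSumExp

theorem mul_sub_le_max {x t a c₀ c₁ : ℝ} (hx : x ∈ Icc 0 1) (h₀ : c₀ ≤ a) (h₁ : t + c₁ ≤ a) :
    x * t - a ≤ max (-c₀) (-c₁) := by
  rcases le_total t 0 with ht | ht
  · exact le_max_of_le_left (by nlinarith [hx.1])
  · exact le_max_of_le_right (by nlinarith [hx.2])

theorem mul_sub_le_of_notMem_Icc {x t a c₀ c₁ γ : ℝ} (hx : x ∈ Ioo 0 1) (h₀ : c₀ ≤ a)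
    (h₁ : t + c₁ ≤ a) (ht : t ∉ Icc ((c₀ - γ) / x) ((γ - c₁) / (1 - x))) : x * t - a ≤ -γ := by
  rw [mem_Icc, not_and_or, not_le, not_le] at ht
  rcases ht with ht | ht
  · linarith [(lt_div_iff₀ hx.1).1 ht]
  · linarith [(div_lt_iff₀ (sub_pos.2 hx.2)).1 ht]

def IsSuperconvolutive (μ : ℕ → ℕ → ℝ) : Prop :=
  ∀ m n : ℕ, 1 ≤ m → 1 ≤ n → ∀ i : ℕ,
    ∑ k ∈ Finset.range (i + 1), μ m k * μ n (i - k) ≤ μ (m + n) i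

namespace IsSuperconvolutive

variable {μ : ℕ → ℕ → ℝ}

theorem mul_le (hμ : IsSuperconvolutive μ) (hnonneg : ∀ n i, 0 ≤ μ n i) {m n : ℕ} (hm : 1 ≤ m)
    (hn : 1 ≤ n) (i j : ℕ) : μ m i * μ n j ≤ μ (m + n) (i + j) :=
  calc μ m i * μ n j = μ m i * μ n (i + j - i) := by rw [Nat.add_sub_cancel_left]
    _ ≤ ∑ k ∈ Finset.range (i + j + 1), μ m k * μ n (i + j - k) :=
      Finset.single_le_sum (f := fun k => μ m k * μ n (i + j - k))
        (fun k _ => mul_nonneg (hnonneg _ _) (hnonneg _ _)) (Finset.mem_range.2 (by omega))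
    _ ≤ μ (m + n) (i + j) := hμ m n hm hn _

theorem pow_le (hμ : IsSuperconvolutive μ) (hnonneg : ∀ n i, 0 ≤ μ n i) (i : ℕ) {n : ℕ}
    (hn : 1 ≤ n) : μ 1 i ^ n ≤ μ n (n * i) := by
  induction n, hn using Nat.le_induction with
  | base => simp
  | succ n hn ih =>
    calc μ 1 i ^ (n + 1) = μ 1 i ^ n * μ 1 i := pow_succ _ _
      _ ≤ μ n (n * i) * μ 1 i := mul_le_mul_of_nonneg_right ih (hnonneg 1 i)
      _ ≤ μ (n + 1) (n * i + i) := hμ.mul_le hnonneg hn le_rfl _ _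
      _ = μ (n + 1) ((n + 1) * i) := by rw [add_one_mul]

end IsSuperconvolutive

/-- The paper's `g_n`. Since `1 / (0 : ℝ) = 0`, `logGenFun μ 0` is identically `0`. -/
noncomputable def logGenFun (μ : ℕ → ℕ → ℝ) (n : ℕ) (t : ℝ) : ℝ :=
  (1 / (n : ℝ)) * Real.log (∑ j ∈ Finset.range (n + 1), μ n j * Real.exp (j * t))

section logGenFun

variable {μ : ℕ → ℕ → ℝ}

theorem mul_add_log_le_logGenFun (hμ : IsSuperconvolutive μ) (hnonneg : ∀ n i, 0 ≤ μ n i)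
    {i : ℕ} (hi : i ≤ 1) (hpos : 0 < μ 1 i) {n : ℕ} (hn : 1 ≤ n) (t : ℝ) :
    i * t + Real.log (μ 1 i) ≤ logGenFun μ n t := by
  have hn' : (0 : ℝ) < n := by exact_mod_cast hn
  have hpow := hμ.pow_le hnonneg i hn
  have hlog_pow : n * Real.log (μ 1 i) ≤ Real.log (μ n (n * i)) := by
    rw [← Real.log_pow]
    exact Real.log_le_log (pow_pos hpos n) hpow
  have hterm := log_add_le_log_sum_mul_exp (hnonneg n) (N := n) (j := n * i) (by nlinarith)
    ((pow_pos hpos n).trans_le hpow) t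
  rw [logGenFun, one_div_mul_eq_div, le_div_iff₀ hn']
  push_cast at hterm
  nlinarith

theorem lipschitzWith_logGenFun (hnonneg : ∀ n i, 0 ≤ μ n i)
    (hpos0 : ∀ n : ℕ, 1 ≤ n → 0 < μ n 0) (n : ℕ) : LipschitzWith 1 (logGenFun μ n) := by
  rcases Nat.eq_zero_or_pos n with rfl | hn
  · have hzero : logGenFun μ 0 = fun _ => 0 := by funext t; simp [logGenFun]
    rw [hzero]
    exact LipschitzWith.const' 0
  refine LipschitzWith.of_le_add_mul 1 fun t s => ?_
  have hn' : (0 : ℝ) < n := by exact_mod_cast hn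
  calc logGenFun μ n t
      ≤ (1 / (n : ℝ)) * (Real.log (∑ j ∈ Finset.range (n + 1), μ n j * Real.exp (j * s)) +
          n * dist t s) :=
        mul_le_mul_of_nonneg_left
          (log_sum_mul_exp_le_add_mul_dist (hnonneg n) (hpos0 n hn) s t) (by positivity)
    _ = logGenFun μ n s + ((1 : NNReal) : ℝ) * dist t s := by
        rw [logGenFun, mul_add, ← mul_assoc, one_div_mul_cancel hn'.ne', NNReal.coe_one]

theorem log_le_logGenFun (hμ : IsSuperconvolutive μ) (hnonneg : ∀ n i, 0 ≤ μ n i)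
    (hpos : 0 < μ 1 0) {n : ℕ} (hn : 1 ≤ n) (t : ℝ) : Real.log (μ 1 0) ≤ logGenFun μ n t := by
  simpa using mul_add_log_le_logGenFun hμ hnonneg zero_le_one hpos hn t

theorem add_log_le_logGenFun (hμ : IsSuperconvolutive μ) (hnonneg : ∀ n i, 0 ≤ μ n i)
    (hpos : 0 < μ 1 1) {n : ℕ} (hn : 1 ≤ n) (t : ℝ) : t + Real.log (μ 1 1) ≤ logGenFun μ n t := by
  simpa using mul_add_log_le_logGenFun hμ hnonneg le_rfl hpos hn t

theorem exists_tendsto_logGenFun (hμ : IsSuperconvolutive μ) (hnonneg : ∀ n i, 0 ≤ μ n i)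
    (hpos0 : ∀ n : ℕ, 1 ≤ n → 0 < μ n 0) {Λ : ℝ → EReal}
    (hΛ : ∀ t, Tendsto (fun n => (logGenFun μ n t : EReal)) atTop (𝓝 (Λ t))) {γ : ℝ}
    (hγ : Λ 0 = γ) (t : ℝ) : ∃ l : ℝ, Λ t = l ∧ Tendsto (logGenFun μ · t) atTop (𝓝 l) := by
  have h0 : Tendsto (logGenFun μ · 0) atTop (𝓝 γ) := EReal.tendsto_coe.1 (hγ ▸ hΛ 0)
  refine EReal.exists_tendsto_coe_of_isBounded (hΛ t) (lo := Real.log (μ 1 0))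
    (hi := γ + 1 + |t|) ?_ ?_
  · filter_upwards [eventually_ge_atTop 1] with n hn
    exact log_le_logGenFun hμ hnonneg (hpos0 1 le_rfl) hn t
  · filter_upwards [h0.eventually_lt_const (lt_add_one γ)] with n hn
    have hlip := (lipschitzWith_logGenFun hnonneg hpos0 n).dist_le_mul t 0
    rw [Real.dist_eq, Real.dist_eq, sub_zero, NNReal.coe_one, one_mul] at hlip
    linarith [le_abs_self (logGenFun μ n t - logGenFun μ n 0)]

theorem tendstoUniformlyOn_logGenFun (hnonneg : ∀ n i, 0 ≤ μ n i)
    (hpos0 : ∀ n : ℕ, 1 ≤ n → 0 < μ n 0) {L : ℝ → ℝ}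
    (hL : ∀ t, Tendsto (logGenFun μ · t) atTop (𝓝 (L t))) {K : Set ℝ} (hK : IsCompact K) :
    TendstoUniformlyOn (logGenFun μ) L atTop K :=
  ((LipschitzWith.uniformEquicontinuous _ 1 (lipschitzWith_logGenFun hnonneg hpos0)
    ).equicontinuous.equicontinuousOn K).tendstoUniformlyOn_of_tendsto hK fun t _ => hL t

end logGenFun

theorem conjugates_converge_on_open_interval_general
    (μ : ℕ → ℕ → ℝ)
    (hnonneg : ∀ n i, 0 ≤ μ n i)
    (hsup : ∀ m n : ℕ, 1 ≤ m → 1 ≤ n → ∀ i : ℕ,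
      ∑ k ∈ Finset.range (i + 1), μ m k * μ n (i - k) ≤ μ (m + n) i)
    (hpos0 : ∀ n : ℕ, 1 ≤ n → 0 < μ n 0)
    (hposn : ∀ n : ℕ, 1 ≤ n → 0 < μ n n)
    (g : ℕ → ℝ → ℝ)
    (hg : ∀ n t, g n t =
      (1 / (n : ℝ)) * Real.log (∑ j ∈ Finset.range (n + 1), μ n j * Real.exp (j * t)))
    (Λ : ℝ → EReal)
    (hΛ : ∀ t : ℝ, Tendsto (fun n : ℕ => ((g n t : ℝ) : EReal)) atTop (𝓝 (Λ t)))
    (γ : ℝ) (hγ : Λ 0 = (γ : EReal))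
    (Λstar : ℝ → EReal)
    (hΛstar : ∀ x : ℝ, Λstar x = ⨆ t : ℝ, (((x * t : ℝ) : EReal) - Λ t))
    (x : ℝ) (hx : x ∈ Set.Ioo (0 : ℝ) 1) :
    Λstar x ≠ ⊤ ∧ Λstar x ≠ ⊥ ∧
    Tendsto (fun n : ℕ => ⨆ t : ℝ, (x * t - g n t)) atTop (𝓝 ((Λstar x).toReal)) := by
  obtain rfl : g = logGenFun μ := funext fun n => funext (hg n)
  have hlb : ∀ᶠ n in atTop, ∀ t,
      Real.log (μ 1 0) ≤ logGenFun μ n t ∧ t + Real.log (μ 1 1) ≤ logGenFun μ n t :=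
    (eventually_ge_atTop 1).mono fun n hn t =>
      ⟨log_le_logGenFun hsup hnonneg (hpos0 1 le_rfl) hn t,
        add_log_le_logGenFun hsup hnonneg (hposn 1 le_rfl) hn t⟩
  choose L hΛL hL using exists_tendsto_logGenFun hsup hnonneg hpos0 hΛ hγ
  have hL0 : L 0 = γ := EReal.coe_injective ((hΛL 0).symm.trans hγ)
  have hbdd : BddAbove (range fun t => x * t - L t) :=
    ⟨_, forall_mem_range.2 fun t => mul_sub_le_max (Ioo_subset_Icc_self hx)
      (ge_of_tendsto (hL t) (hlb.mono fun n h => (h t).1))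
      (ge_of_tendsto (hL t) (hlb.mono fun n h => (h t).2))⟩
  have hstar : Λstar x = ((⨆ t, x * t - L t : ℝ) : EReal) := by
    simp only [hΛstar, hΛL, ← EReal.coe_sub, EReal.coe_ciSup hbdd]
  refine ⟨hstar ▸ EReal.coe_ne_top _, hstar ▸ EReal.coe_ne_bot _, ?_⟩
  rw [hstar, EReal.toReal_coe]
  refine tendsto_ciSup_of_tendstoUniformlyOn hbdd (fun t => (hL t).const_sub _)
    ((tendstoUniformlyOn_logGenFun hnonneg hpos0 hL (isCompact_Icc
      (a := (Real.log (μ 1 0) - γ) / x) (b := (γ - Real.log (μ 1 1)) / (1 - x)))).sub_left _) ?_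
  filter_upwards [hlb] with n hn t ht
  calc x * t - logGenFun μ n t ≤ -γ := mul_sub_le_of_notMem_Icc hx (hn t).1 (hn t).2 ht
    _ = x * 0 - L 0 := by rw [hL0, mul_zero, zero_sub]
    _ ≤ ⨆ t, x * t - L t := le_ciSup hbdd 0

/-- For a proper super-convolutive sequence with normalized log
generating functions `g n` and limit `Λ`, the convex conjugates converge on
`(0,1)`: `lim_n g_n*(x) = Λ*(x)` for every `x ∈ (0,1)`. -/
theorem conjugates_converge_on_open_interval
    (μ : ℕ → ℕ → ℝ)
    (hnonneg : ∀ n i, 0 ≤ μ n i)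
    (hzero : ∀ n i : ℕ, n + 1 ≤ i → μ n i = 0)
    (hsup : ∀ m n : ℕ, 1 ≤ m → 1 ≤ n → ∀ i : ℕ,
      ∑ k ∈ Finset.range (i + 1), μ m k * μ n (i - k) ≤ μ (m + n) i)
    (hpos0 : ∀ n : ℕ, 1 ≤ n → 0 < μ n 0)
    (hposn : ∀ n : ℕ, 1 ≤ n → 0 < μ n n)
    (β : ℝ)
    (hβ : Tendsto (fun n : ℕ => (1 / (n : ℝ)) * Real.log (μ n 0)) atTop (𝓝 β))
    (g : ℕ → ℝ → ℝ)
    (hg : ∀ n t, g n t =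
      (1 / (n : ℝ)) * Real.log (∑ j ∈ Finset.range (n + 1), μ n j * Real.exp (j * t)))
    (Λ : ℝ → EReal)
    (hΛ : ∀ t : ℝ, Tendsto (fun n : ℕ => ((g n t : ℝ) : EReal)) atTop (𝓝 (Λ t)))
    (γ : ℝ) (hγ : Λ 0 = (γ : EReal))
    (Λstar : ℝ → EReal)
    (hΛstar : ∀ x : ℝ, Λstar x = ⨆ t : ℝ, (((x * t : ℝ) : EReal) - Λ t))
    (x : ℝ) (hx : x ∈ Set.Ioo (0 : ℝ) 1) :
    Λstar x ≠ ⊤ ∧ Λstar x ≠ ⊥ ∧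
    Tendsto (fun n : ℕ => ⨆ t : ℝ, (x * t - g n t)) atTop (𝓝 ((Λstar x).toReal)) :=
  conjugates_converge_on_open_interval_general μ hnonneg hsup hpos0 hposn g hg Λ hΛ γ hγ Λstar
    hΛstar x hx
end

section
/- Let (f_n) be a sequence of continuous concave functions on [a,b] converging pointwise and monotonically decreasing (f_{n+1} ≤ f_n) to a function f with f(x) > −∞ for all x. Then f is continuous and concave on [a,b]. -/
/-!
The limit `g` is concave as a pointwise limit of concave functions, and upper semicontinuous as
the infimum of the continuous functions `f n`. Lower semicontinuity holds for every concave
function on `[a, b]`: at `x`, the graph of `g` lies above the two secants joining `x` to the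
endpoints, each on its own side of `x`, and their minimum is a continuous minorant touching `g`
at `x`. Upper and lower semicontinuity together give continuity.
-/

open Filter Set
open scoped Topology

theorem ConcaveOn.of_tendsto {E ι : Type*} [AddCommGroup E] [Module ℝ E] {s : Set E}
    {l : Filter ι} [l.NeBot] {F : ι → E → ℝ} {g : E → ℝ}
    (hF : ∀ᶠ i in l, ConcaveOn ℝ s (F i)) (hlim : ∀ x ∈ s, Tendsto (F · x) l (𝓝 (g x))) :
    ConcaveOn ℝ s g := by
  obtain ⟨-, hs, -⟩ := hF.exists
  refine ⟨hs, fun x hx y hy p q hp hq hpq => ?_⟩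
  refine le_of_tendsto_of_tendsto (((hlim x hx).const_smul p).add ((hlim y hy).const_smul q))
    (hlim _ (hs hx hy hp hq hpq)) ?_
  filter_upwards [hF] with i hi using hi.2 hx hy hp hq hpq

section Semicontinuity

variable {α β : Type*} [TopologicalSpace α] [LinearOrder β] [TopologicalSpace β]
  [OrderTopology β] {s : Set α} {x : α} {g : α → β}

theorem upperSemicontinuousWithinAt_of_tendsto_of_le {ι : Type*} {l : Filter ι} [l.NeBot]
    {F : ι → α → β} (hF : ∀ i, ContinuousWithinAt (F i) s x) (hle : ∀ i, ∀ y ∈ s, g y ≤ F i y)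
    (hlim : Tendsto (F · x) l (𝓝 (g x))) : UpperSemicontinuousWithinAt g s x := by
  intro c hc
  obtain ⟨i, hi⟩ := (hlim.eventually (eventually_lt_nhds hc)).exists
  filter_upwards [(hF i).upperSemicontinuousWithinAt c hi, self_mem_nhdsWithin] with y hy hys
  exact (hle i y hys).trans_lt hy

theorem ContinuousWithinAt.lowerSemicontinuousWithinAt_of_le_of_eq {L : α → β}
    (hL : ContinuousWithinAt L s x) (hle : ∀ y ∈ s, L y ≤ g y) (heq : L x = g x) :
    LowerSemicontinuousWithinAt g s x := by
  intro c hc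
  filter_upwards [hL.lowerSemicontinuousWithinAt c (heq.symm ▸ hc :), self_mem_nhdsWithin]
    with y hy hys
  exact hy.trans_le (hle y hys)

end Semicontinuity

section Secant

variable {𝕜 : Type*} [Field 𝕜] [LinearOrder 𝕜] [IsStrictOrderedRing 𝕜] {s : Set 𝕜} {g : 𝕜 → 𝕜}

theorem ConcaveOn.add_min_mul_slope_le (hg : ConcaveOn 𝕜 s g) {a b x y : 𝕜} (ha : a ∈ s)
    (hb : b ∈ s) (hx : x ∈ s) (hy : y ∈ s) (hay : a ≤ y) (hyb : y ≤ b) :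
    g x + min ((y - x) * slope g x a) ((y - x) * slope g x b) ≤ g y := by
  have hsecant : (y - x) * slope g x y = g y - g x := sub_smul_slope g x y
  rcases lt_trichotomy y x with hyx | rfl | hxy
  · have hslope : slope g x y ≤ slope g x a :=
      hg.slope_anti hx ⟨ha, (hay.trans_lt hyx).ne⟩ ⟨hy, hyx.ne⟩ hay
    have := mul_le_mul_of_nonpos_left hslope (sub_nonpos.2 hyx.le)
    linarith [min_le_left ((y - x) * slope g x a) ((y - x) * slope g x b)]
  · simp
  · have hslope : slope g x b ≤ slope g x y :=
      hg.slope_anti hx ⟨hy, hxy.ne'⟩ ⟨hb, (hxy.trans_le hyb).ne'⟩ hyb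
    have := mul_le_mul_of_nonneg_left hslope (sub_nonneg.2 hxy.le)
    linarith [min_le_right ((y - x) * slope g x a) ((y - x) * slope g x b)]

variable [TopologicalSpace 𝕜] [OrderTopology 𝕜]

theorem ConcaveOn.lowerSemicontinuousWithinAt_Icc {a b x : 𝕜} (hg : ConcaveOn 𝕜 (Icc a b) g)
    (hx : x ∈ Icc a b) : LowerSemicontinuousWithinAt g (Icc a b) x := by
  have hab : a ≤ b := hx.1.trans hx.2
  refine ContinuousWithinAt.lowerSemicontinuousWithinAt_of_le_of_eq
    (L := fun y => g x + min ((y - x) * slope g x a) ((y - x) * slope g x b))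
    (by fun_prop) (fun y hy => ?_) (by simp)
  exact hg.add_min_mul_slope_le (left_mem_Icc.2 hab) (right_mem_Icc.2 hab) hx hy hy.1 hy.2

end Secant

theorem decreasing_concave_limit_continuous_general
    (a b : ℝ) (f : ℕ → ℝ → ℝ) (g : ℝ → ℝ)
    (hconc : ∀ n, ConcaveOn ℝ (Set.Icc a b) (f n))
    (hcont : ∀ n, ContinuousOn (f n) (Set.Icc a b))
    (hdec : ∀ n, ∀ x ∈ Set.Icc a b, f (n + 1) x ≤ f n x)
    (hpt : ∀ x ∈ Set.Icc a b, Tendsto (fun n => f n x) atTop (𝓝 (g x))) :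
    ContinuousOn g (Set.Icc a b) ∧ ConcaveOn ℝ (Set.Icc a b) g := by
  have hle : ∀ n, ∀ x ∈ Icc a b, g x ≤ f n x := fun n x hx =>
    (antitone_nat_of_succ_le fun m => hdec m x hx).le_of_tendsto (hpt x hx) n
  have hg : ConcaveOn ℝ (Icc a b) g := ConcaveOn.of_tendsto (.of_forall hconc) hpt
  refine ⟨fun x hx => continuousWithinAt_iff_lower_upperSemicontinuousWithinAt.2 ⟨?_, ?_⟩, hg⟩
  · exact hg.lowerSemicontinuousWithinAt_Icc hx
  · exact upperSemicontinuousWithinAt_of_tendsto_of_le (fun n => hcont n x hx) hle (hpt x hx)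

/-- A monotonically decreasing sequence of continuous concave
functions on `[a,b]` converging pointwise to a (finite, real-valued) function `f`
has a continuous concave limit on `[a,b]`. -/
theorem decreasing_concave_limit_continuous
    (a b : ℝ) (hab : a ≤ b) (f : ℕ → ℝ → ℝ) (g : ℝ → ℝ)
    (hconc : ∀ n, ConcaveOn ℝ (Set.Icc a b) (f n))
    (hcont : ∀ n, ContinuousOn (f n) (Set.Icc a b))
    (hdec : ∀ n, ∀ x ∈ Set.Icc a b, f (n + 1) x ≤ f n x)
    (hpt : ∀ x ∈ Set.Icc a b, Tendsto (fun n => f n x) atTop (𝓝 (g x))) :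
    ContinuousOn g (Set.Icc a b) ∧ ConcaveOn ℝ (Set.Icc a b) g :=
  decreasing_concave_limit_continuous_general a b f g hconc hcont hdec hpt
end
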